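/- For any b ∈ ℕ and any real polynomials r of degree ≤ m whose coefficient sequence has at most m sign changes and q of degree ≤ k-1, the coefficient sequence of (t+1)^b r(t) + q(t) has at most m + k sign changes. -/

import Mathlib

open Polynomial

/-- The number of sign changes of a finite sequence of reals: zeros are discarded,
and we count adjacent pairs of opposite sign in the remaining sequence. -/
noncomputable def signChanges (l : List ℝ) : ℕ :=
  let l' := l.filter (fun x => decide (x ≠ 0))
  (l'.zip l'.tail).countP (fun p => decide (p.1 * p.2 < 0))

/-- The number of sign changes of the coefficient sequence of a real polynomial. -/
noncomputable def coeffSignChanges (p : Polynomial ℝ) : ℕ :=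
  signChanges ((List.range (p.natDegree + 1)).map p.coeff)

noncomputable def sgc (l : List ℝ) : ℕ :=
  (l.zip l.tail).countP (fun p => decide (p.1 * p.2 < 0))

lemma signChanges_eq_sgc (l : List ℝ) :
    signChanges l = sgc (l.filter (fun x => decide (x ≠ 0))) := rfl

lemma sgc_nil : sgc ([] : List ℝ) = 0 := rfl

lemma sgc_singleton (x : ℝ) : sgc [x] = 0 := rfl

lemma sgc_cons_cons (x y : ℝ) (l : List ℝ) :
    sgc (x :: y :: l) = sgc (y :: l) + (if x * y < 0 then 1 else 0) := by
  simp [sgc, List.countP_cons]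

lemma sgc_le_cons (x : ℝ) (l : List ℝ) : sgc l ≤ sgc (x :: l) := by
  cases l with
  | nil => simp [sgc_nil, sgc_singleton]
  | cons y l => rw [sgc_cons_cons]; omega

lemma sgc_cons_le (x : ℝ) (l : List ℝ) : sgc (x :: l) ≤ 1 + sgc l := by
  cases l with
  | nil => simp [sgc_singleton]
  | cons y l => rw [sgc_cons_cons]; split <;> omega

lemma key_sign (s x y : ℝ) (hx : 0 < s * x) (hy : s * y < 0) :
    x * y < 0 := by
  have hsne : s ≠ 0 := fun h => by simp [h] at hx
  have hss : 0 < s * s := mul_self_pos.mpr hsne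
  nlinarith [mul_neg_of_pos_of_neg hx hy]

lemma key_sign2 (s x y : ℝ) (hx : 0 < s * x) (hy : 0 < s * y) :
    0 < x * y := by
  have hsne : s ≠ 0 := fun h => by simp [h] at hx
  have hss : 0 < s * s := mul_self_pos.mpr hsne
  nlinarith [mul_pos hx hy]

lemma key_sign3 (x y z : ℝ) (hxy : 0 < x * y) (hxz : x * z < 0) : y * z < 0 := by
  nlinarith [mul_neg_of_pos_of_neg hxy hxz, sq_nonneg x, mul_self_nonneg x]

lemma sgc_cons_sign (x y : ℝ) (l : List ℝ) (h : 0 < x * y) :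
    sgc (x :: l) = sgc (y :: l) := by
  cases l with
  | nil => rfl
  | cons z l =>
    rw [sgc_cons_cons, sgc_cons_cons]
    congr 1
    by_cases hxz : x * z < 0
    · rw [if_pos hxz, if_pos (key_sign3 x y z h hxz)]
    · rw [if_neg hxz, if_neg]
      intro hyz
      exact hxz (key_sign3 y x z (by linarith [mul_comm x y]) hyz)

lemma sgc_eq_zero_of_sign (s : ℝ) (l : List ℝ) (h : ∀ x ∈ l, 0 < s * x) :
    sgc l = 0 := by
  rw [sgc, List.countP_eq_zero]
  rintro ⟨a, b⟩ hab
  obtain ⟨ha, hb⟩ := List.of_mem_zip hab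
  have hb' := List.mem_of_mem_tail hb
  simp only [decide_eq_true_eq]
  exact not_lt.mpr (le_of_lt (key_sign2 s a b (h a ha) (h b hb')))

lemma sgc_append_le (A L : List ℝ) : sgc (A ++ L) ≤ A.length + sgc L := by
  induction A with
  | nil => simp
  | cons a A ih =>
    calc sgc (a :: (A ++ L)) ≤ 1 + sgc (A ++ L) := sgc_cons_le _ _
    _ ≤ 1 + (A.length + sgc L) := by omega
    _ = (a :: A).length + sgc L := by simp; omega

lemma le_sgc_append (A L : List ℝ) : sgc L ≤ sgc (A ++ L) := by
  induction A with
  | nil => simp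
  | cons a A ih => exact ih.trans (sgc_le_cons _ _)

lemma sgc_sign_prefix_le (s : ℝ) (A L : List ℝ) (hA : ∀ x ∈ A, 0 < s * x) :
    sgc (A ++ L) ≤ 1 + sgc L := by
  induction A with
  | nil => simp
  | cons a A ih =>
    cases A with
    | nil => simpa using sgc_cons_le a L
    | cons a2 A' =>
      have h1 : 0 < a * a2 :=
        key_sign2 s a a2 (hA a (by simp)) (hA a2 (by simp))
      show sgc (a :: a2 :: (A' ++ L)) ≤ 1 + sgc L
      rw [sgc_cons_cons, if_neg (not_lt.mpr (le_of_lt h1))]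
      simpa using ih (fun x hx => hA x (List.mem_cons_of_mem _ hx))

lemma sgc_sign_prefix_absorb (s : ℝ) (A : List ℝ) (hA : ∀ x ∈ A, 0 < s * x)
    (w : ℝ) (hw : 0 < s * w) (L : List ℝ) :
    sgc (A ++ w :: L) = sgc (w :: L) := by
  induction A with
  | nil => simp
  | cons a A ih =>
    have hnext : 0 < a * ((A ++ w :: L).headI) := by
      cases A with
      | nil => exact key_sign2 s a w (hA a (by simp)) hw
      | cons a2 A' => exact key_sign2 s a a2 (hA a (by simp)) (hA a2 (by simp))
    have hrest := ih (fun x hx => hA x (List.mem_cons_of_mem _ hx))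
    show sgc (a :: (A ++ w :: L)) = sgc (w :: L)
    cases hAL : A ++ w :: L with
    | nil => exact absurd hAL (by simp)
    | cons b M =>
      rw [hAL] at hnext hrest
      rw [sgc_cons_cons, if_neg (not_lt.mpr (le_of_lt (by simpa using hnext)))]
      simpa using hrest

lemma sgc_sign_junction (s : ℝ) (A : List ℝ) (hA : ∀ x ∈ A, 0 < s * x)
    (hAne : A ≠ []) (y : ℝ) (hy : s * y < 0) (L : List ℝ) :
    1 + sgc (y :: L) ≤ sgc (A ++ y :: L) := by
  induction A with
  | nil => exact absurd rfl hAne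
  | cons a A ih =>
    cases A with
    | nil =>
      show _ ≤ sgc (a :: y :: L)
      rw [sgc_cons_cons, if_pos (key_sign s a y (hA a (by simp)) hy)]
      omega
    | cons a2 A' =>
      calc 1 + sgc (y :: L) ≤ sgc ((a2 :: A') ++ y :: L) :=
            ih (fun x hx => hA x (List.mem_cons_of_mem _ hx)) (by simp)
      _ ≤ sgc (a :: ((a2 :: A') ++ y :: L)) := sgc_le_cons _ _

lemma filter_cons_zero (l : List ℝ) :
    (0 :: l).filter (fun x => decide (x ≠ 0)) = l.filter (fun x => decide (x ≠ 0)) := by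
  simp

lemma filter_cons_ne (x : ℝ) (hx : x ≠ 0) (l : List ℝ) :
    (x :: l).filter (fun x => decide (x ≠ 0)) = x :: l.filter (fun x => decide (x ≠ 0)) := by
  simp [List.filter_cons, hx]

lemma V_cons_zero (l : List ℝ) : signChanges (0 :: l) = signChanges l := by
  rw [signChanges_eq_sgc, filter_cons_zero, ← signChanges_eq_sgc]

lemma V_le_cons (x : ℝ) (l : List ℝ) : signChanges l ≤ signChanges (x :: l) := by
  by_cases hx : x = 0
  · subst hx; rw [V_cons_zero]
  · rw [signChanges_eq_sgc, signChanges_eq_sgc, filter_cons_ne x hx]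
    exact sgc_le_cons _ _

lemma V_cons_le (x : ℝ) (l : List ℝ) : signChanges (x :: l) ≤ 1 + signChanges l := by
  by_cases hx : x = 0
  · subst hx; rw [V_cons_zero]; omega
  · rw [signChanges_eq_sgc, signChanges_eq_sgc, filter_cons_ne x hx]
    exact sgc_cons_le _ _

lemma V_append_le (A L : List ℝ) : signChanges (A ++ L) ≤ A.length + signChanges L := by
  induction A with
  | nil => simp
  | cons a A ih =>
    calc signChanges (a :: (A ++ L)) ≤ 1 + signChanges (A ++ L) := V_cons_le _ _
    _ ≤ 1 + (A.length + signChanges L) := by omega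
    _ = (a :: A).length + signChanges L := by simp; omega

lemma V_le_append (A L : List ℝ) : signChanges L ≤ signChanges (A ++ L) := by
  induction A with
  | nil => simp
  | cons a A ih => exact ih.trans (V_le_cons _ _)

lemma V_cons_sign (x y : ℝ) (l : List ℝ) (h : 0 < x * y) :
    signChanges (x :: l) = signChanges (y :: l) := by
  have hx : x ≠ 0 := by intro h0; rw [h0] at h; simp at h
  have hy : y ≠ 0 := by intro h0; rw [h0] at h; simp at h
  rw [signChanges_eq_sgc, signChanges_eq_sgc, filter_cons_ne x hx, filter_cons_ne y hy]
  exact sgc_cons_sign x y _ h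

lemma strict_of_filter (s : ℝ) (hs : s * s = 1) (l : List ℝ) (h : ∀ x ∈ l, 0 ≤ s * x) :
    ∀ x ∈ l.filter (fun x => decide (x ≠ 0)), 0 < s * x := by
  intro x hx
  rw [List.mem_filter] at hx
  obtain ⟨hxl, hxne⟩ := hx
  have hxne' : x ≠ 0 := by simpa using hxne
  have hsne : s ≠ 0 := by intro h0; rw [h0] at hs; simp at hs
  exact lt_of_le_of_ne (h x hxl) (fun h0 => hxne' (by
    rcases mul_eq_zero.mp h0.symm with h1 | h1
    · exact absurd h1 hsne
    · exact h1))

lemma V_zero_of_sign (s : ℝ) (hs : s * s = 1) (l : List ℝ) (h : ∀ x ∈ l, 0 ≤ s * x) :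
    signChanges l = 0 := by
  rw [signChanges_eq_sgc]
  exact sgc_eq_zero_of_sign s _ (strict_of_filter s hs l h)

lemma V_signprefix_le (s : ℝ) (hs : s * s = 1) (A L : List ℝ) (hA : ∀ x ∈ A, 0 ≤ s * x) :
    signChanges (A ++ L) ≤ 1 + signChanges L := by
  rw [signChanges_eq_sgc, signChanges_eq_sgc, List.filter_append]
  exact sgc_sign_prefix_le s _ _ (strict_of_filter s hs A hA)

lemma V_signprefix_absorb (s : ℝ) (hs : s * s = 1) (A : List ℝ) (hA : ∀ x ∈ A, 0 ≤ s * x)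
    (w : ℝ) (hw : 0 < s * w) (L : List ℝ) :
    signChanges (A ++ w :: L) = signChanges (w :: L) := by
  have hwne : w ≠ 0 := by
    intro h0; rw [h0, mul_zero] at hw; exact lt_irrefl 0 hw
  rw [signChanges_eq_sgc, signChanges_eq_sgc, List.filter_append, filter_cons_ne w hwne]
  exact sgc_sign_prefix_absorb s _ (strict_of_filter s hs A hA) w hw _

lemma V_junction (s : ℝ) (hs : s * s = 1) (A : List ℝ) (hA : ∀ x ∈ A, 0 ≤ s * x)
    (hex : ∃ z ∈ A, z ≠ 0) (y : ℝ) (hy : s * y < 0) (L : List ℝ) :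
    1 + signChanges (y :: L) ≤ signChanges (A ++ y :: L) := by
  have hyne : y ≠ 0 := by
    intro h0; rw [h0, mul_zero] at hy; exact lt_irrefl 0 hy
  rw [signChanges_eq_sgc, signChanges_eq_sgc, List.filter_append, filter_cons_ne y hyne]
  apply sgc_sign_junction s _ (strict_of_filter s hs A hA) _ y hy
  obtain ⟨z, hz, hzne⟩ := hex
  intro hnil
  have : z ∈ A.filter (fun x => decide (x ≠ 0)) := List.mem_filter.mpr ⟨hz, by simpa⟩
  rw [hnil] at this
  simp at this

lemma V_zeros_prefix (A L : List ℝ) (hA : ∀ x ∈ A, x = 0) :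
    signChanges (A ++ L) = signChanges L := by
  rw [signChanges_eq_sgc, signChanges_eq_sgc, List.filter_append]
  have : A.filter (fun x => decide (x ≠ 0)) = [] := by
    rw [List.filter_eq_nil_iff]
    intro a ha
    simpa using hA a ha
  rw [this, List.nil_append]

def addHead (a : ℝ) : List ℝ → List ℝ
  | [] => [a]
  | x :: l => (a + x) :: addHead x l

def front (a : ℝ) : List ℝ → List ℝ
  | [] => []
  | x :: l => (a + x) :: front x l

def conv : List ℝ → List ℝ
  | [] => []
  | x :: l => x :: addHead x l

lemma addHead_length (a : ℝ) (l : List ℝ) : (addHead a l).length = l.length + 1 := by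
  induction l generalizing a with
  | nil => rfl
  | cons x l ih => simp [addHead, ih]

lemma addHead_split (l1 : List ℝ) : ∀ (a : ℝ) (l2 : List ℝ),
    addHead a (l1 ++ l2) = front a l1 ++ addHead ((a :: l1).getLast (by simp)) l2 := by
  induction l1 with
  | nil => intro a l2; simp [front]
  | cons x t ih =>
    intro a l2
    show (a + x) :: addHead x (t ++ l2) = ((a + x) :: front x t) ++ _
    rw [List.cons_append, ih x l2]
    congr 2

lemma front_sign (s : ℝ) (l : List ℝ) : ∀ (a : ℝ), 0 ≤ s * a → (∀ x ∈ l, 0 ≤ s * x) →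
    ∀ y ∈ front a l, 0 ≤ s * y := by
  induction l with
  | nil => intro a _ _ y hy; simp [front] at hy
  | cons x t ih =>
    intro a ha hl y hy
    rw [front, List.mem_cons] at hy
    rcases hy with hy | hy
    · subst hy
      have := hl x (by simp)
      rw [mul_add]; linarith
    · exact ih x (hl x (by simp)) (fun z hz => hl z (by simp [hz])) y hy

lemma addHead_sign (s : ℝ) (l : List ℝ) : ∀ (a : ℝ), 0 ≤ s * a → (∀ x ∈ l, 0 ≤ s * x) →
    ∀ y ∈ addHead a l, 0 ≤ s * y := by
  induction l with
  | nil =>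
    intro a ha _ y hy
    rw [addHead, List.mem_singleton] at hy; subst hy; exact ha
  | cons x t ih =>
    intro a ha hl y hy
    rw [addHead, List.mem_cons] at hy
    rcases hy with hy | hy
    · subst hy
      have := hl x (by simp)
      rw [mul_add]; linarith
    · exact ih x (hl x (by simp)) (fun z hz => hl z (by simp [hz])) y hy

lemma addHead_getD (l : List ℝ) : ∀ (a : ℝ) (i : ℕ), i ≤ l.length →
    (addHead a l).getD i 0 = (if i = 0 then a else l.getD (i-1) 0) + l.getD i 0 := by
  induction l with
  | nil =>
    intro a i hi
    have hi0 : i = 0 := Nat.le_zero.mp hi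
    subst hi0
    simp [addHead]
  | cons x t ih =>
    intro a i hi
    cases i with
    | zero => simp [addHead]
    | succ j =>
      have hj : j ≤ t.length := by simpa using hi
      show (addHead x t).getD j 0 = _
      rw [ih x j hj]
      rcases Nat.eq_zero_or_pos j with hj0 | hj0
      · subst hj0; simp
      · have : j - 1 + 1 = j := Nat.succ_pred_eq_of_pos hj0
        simp only [if_neg (Nat.succ_ne_zero j), if_neg (Nat.pos_iff_ne_zero.mp hj0)]
        rw [Nat.succ_sub_one]
        cases j with
        | zero => omega
        | succ j' => simp [List.getD_cons_succ]

theorem V_conv_aux : ∀ (n : ℕ) (c : List ℝ), c.length ≤ n →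
    signChanges (conv c) ≤ signChanges c := by
  intro n
  induction n with
  | zero =>
    intro c hc
    have : c = [] := List.length_eq_zero_iff.mp (Nat.le_zero.mp hc)
    subst this
    simp [conv]
  | succ n ih =>
    intro c hc
    match c with
    | [] => simp [conv]
    | h :: t =>
      set s : ℝ := if 0 ≤ h then 1 else -1 with hsdef
      have hss : s * s = 1 := by
        rw [hsdef]; split <;> norm_num
      have hsh : 0 ≤ s * h := by
        rw [hsdef]; split <;> [linarith; nlinarith]
      set P : ℝ → Bool := fun x => decide (0 ≤ s * x) with hPdef
      have hPh : P h = true := by simp [hPdef, hsh]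
      set c1' : List ℝ := t.takeWhile P with hc1'
      have hA : ∀ x ∈ h :: c1', 0 ≤ s * x := by
        intro x hx
        rcases List.mem_cons.mp hx with hx | hx
        · subst hx; exact hsh
        · have := List.mem_takeWhile_imp hx
          simpa [hPdef] using this
      cases hc2eq : t.dropWhile P with
      | nil =>
        have hsplit : c1' ++ ([] : List ℝ) = t := by
          rw [hc1', ← hc2eq]; exact List.takeWhile_append_dropWhile
        -- all of c has weak sign s
        have hall : ∀ x ∈ h :: t, 0 ≤ s * x := by
          rw [← hsplit, List.append_nil]
          exact hA
        have : signChanges (conv (h :: t)) = 0 := by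
          apply V_zero_of_sign s hss
          show ∀ x ∈ h :: addHead h t, 0 ≤ s * x
          intro x hx
          rcases List.mem_cons.mp hx with hx | hx
          · subst hx; exact hsh
          · exact addHead_sign s t h hsh (fun z hz => hall z (by simp [hz])) x hx
        omega
      | cons y u =>
        have hsplit : c1' ++ (y :: u) = t := by
          rw [hc1', ← hc2eq]; exact List.takeWhile_append_dropWhile
        have hPy : P y = false := by
          have hne : List.dropWhile P t ≠ [] := by rw [hc2eq]; simp
          have h1 := List.head_dropWhile_not P hne
          have h2 : (List.dropWhile P t).head hne = y := by simp [hc2eq]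
          rw [h2] at h1; exact h1
        have hy : s * y < 0 := by
          rw [hPdef] at hPy
          simpa using not_le.mp (by simpa using hPy)
        have hylen : (y :: u).length ≤ n := by
          have h1 : (y :: u).length ≤ t.length := by
            rw [← hc2eq]; exact (List.dropWhile_sublist P).length_le
          simp only [List.length_cons] at hc h1 ⊢
          omega
        have IH2 := ih (y :: u) hylen
        -- decompose conv (h :: t)
        set g : ℝ := (h :: c1').getLast (by simp) with hgdef
        have hg : 0 ≤ s * g := hA g (List.getLast_mem _)
        have hconv : conv (h :: t) = (h :: front h c1') ++ (g + y) :: addHead y u := by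
          show h :: addHead h t = _
          rw [← hsplit, addHead_split c1' h (y :: u)]
          rfl
        set A : List ℝ := h :: front h c1' with hAdef
        have hAsign : ∀ x ∈ A, 0 ≤ s * x := by
          intro x hx
          rcases List.mem_cons.mp hx with hx | hx
          · subst hx; exact hsh
          · exact front_sign s c1' h hsh (fun z hz => hA z (by simp [hz])) x hx
        set w : ℝ := g + y with hwdef
        set rest : List ℝ := addHead y u with hrest
        have hconvc2 : conv (y :: u) = y :: rest := rfl
        have hVt : signChanges (h :: t) = signChanges ((h :: c1') ++ (y :: u)) := by
          rw [show (h :: c1') ++ (y :: u) = h :: t by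
            rw [List.cons_append, hsplit]]
        rw [hconv, hVt]
        by_cases hzero : ∀ x ∈ h :: c1', x = 0
        · -- c1 all zeros
          have hg0 : g = 0 := hzero g (List.getLast_mem _)
          have hA0 : ∀ x ∈ A, x = 0 := by
            intro x hx
            rcases List.mem_cons.mp hx with hx | hx
            · exact hx ▸ hzero h (by simp)
            · -- x ∈ front h c1', all sums of zeros
              have : ∀ z ∈ front h c1', z = 0 := by
                clear hx
                have : ∀ (a : ℝ), a = 0 → (∀ z ∈ c1', z = 0) →
                    ∀ z ∈ front a c1', z = 0 := by
                  induction c1' with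
                  | nil => intro a _ _ z hz; simp [front] at hz
                  | cons p q ihq =>
                    intro a ha hq z hz
                    rw [front, List.mem_cons] at hz
                    rcases hz with hz | hz
                    · rw [hz, ha, hq p (by simp), add_zero]
                    · exact ihq p (hq p (by simp)) (fun r hr => hq r (by simp [hr])) z hz
                exact this h (hzero h (by simp)) (fun z hz => hzero z (by simp [hz]))
              exact this x hx
          have e1 : signChanges (A ++ w :: rest) = signChanges (w :: rest) :=
            V_zeros_prefix A _ hA0
          have e2 : w = y := by rw [hwdef, hg0, zero_add]
          rw [e1, e2, ← hconvc2]
          calc signChanges (conv (y :: u)) ≤ signChanges (y :: u) := IH2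
          _ ≤ signChanges ((h :: c1') ++ (y :: u)) := V_le_append _ _
        · -- c1 has a nonzero entry
          push_neg at hzero
          have hjun : 1 + signChanges (y :: u) ≤
              signChanges ((h :: c1') ++ (y :: u)) :=
            V_junction s hss _ hA hzero y hy _
          have key : signChanges (A ++ w :: rest) ≤ 1 + signChanges (y :: u) := by
            rcases lt_trichotomy (s * w) 0 with hw | hw | hw
            · -- w strict sign -s, same sign as y
              have hwy : 0 < w * y := by nlinarith
              calc signChanges (A ++ w :: rest) ≤ 1 + signChanges (w :: rest) :=
                    V_signprefix_le s hss A _ hAsign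
              _ = 1 + signChanges (y :: rest) := by rw [V_cons_sign w y rest hwy]
              _ = 1 + signChanges (conv (y :: u)) := by rw [hconvc2]
              _ ≤ 1 + signChanges (y :: u) := by omega
            · -- w = 0
              have hw0 : w = 0 := by
                have hsne : s ≠ 0 := by intro h0; rw [h0] at hss; simp at hss
                rcases mul_eq_zero.mp hw with h1 | h1
                · exact absurd h1 hsne
                · exact h1
              calc signChanges (A ++ w :: rest) ≤ 1 + signChanges (w :: rest) :=
                    V_signprefix_le s hss A _ hAsign
              _ = 1 + signChanges rest := by rw [hw0, V_cons_zero]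
              _ ≤ 1 + signChanges (y :: rest) := by
                    have := V_le_cons y rest; omega
              _ = 1 + signChanges (conv (y :: u)) := by rw [hconvc2]
              _ ≤ 1 + signChanges (y :: u) := by omega
            · -- w strict sign s
              calc signChanges (A ++ w :: rest) = signChanges (w :: rest) :=
                    V_signprefix_absorb s hss A hAsign w hw rest
              _ ≤ 1 + signChanges rest := V_cons_le _ _
              _ ≤ 1 + signChanges (y :: rest) := by
                    have := V_le_cons y rest; omega
              _ = 1 + signChanges (conv (y :: u)) := by rw [hconvc2]
              _ ≤ 1 + signChanges (y :: u) := by omega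
          omega

theorem V_conv (c : List ℝ) : signChanges (conv c) ≤ signChanges c :=
  V_conv_aux c.length c le_rfl

lemma conv_getD (c : List ℝ) (i : ℕ) (h : i ≤ c.length) :
    (conv c).getD i 0 = c.getD i 0 + (if i = 0 then 0 else c.getD (i-1) 0) := by
  cases c with
  | nil =>
    have : i = 0 := Nat.le_zero.mp h
    subst this; simp [conv]
  | cons x l =>
    cases i with
    | zero => simp [conv]
    | succ j =>
      have hj : j ≤ l.length := by simpa using h
      show (addHead x l).getD j 0 = _
      rw [addHead_getD l x j hj]
      simp only [Nat.succ_ne_zero, if_neg, Nat.succ_sub_one]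
      rw [List.getD_cons_succ]
      cases j with
      | zero => simp [add_comm]
      | succ j' => simp [List.getD_cons_succ, add_comm]

lemma conv_length (c : List ℝ) (hc : c ≠ []) : (conv c).length = c.length + 1 := by
  cases c with
  | nil => exact absurd rfl hc
  | cons x l => show (x :: addHead x l).length = _; simp [addHead_length]

lemma coeffList_getD (p : Polynomial ℝ) (j : ℕ) :
    ((List.range (p.natDegree + 1)).map p.coeff).getD j 0 = p.coeff j := by
  by_cases hj : j < p.natDegree + 1
  · rw [List.getD_eq_getElem _ _ (by simpa using hj)]
    simp
  · rw [List.getD_eq_default _ _ (by simpa using not_lt.mp hj)]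
    exact (Polynomial.coeff_eq_zero_of_natDegree_lt (by omega)).symm

lemma coeff_XaddOne_mul (p : Polynomial ℝ) (n : ℕ) :
    ((X + 1) * p).coeff n = p.coeff n + (if n = 0 then 0 else p.coeff (n - 1)) := by
  rw [add_mul, one_mul, Polynomial.coeff_add]
  cases n with
  | zero => simp [Polynomial.mul_coeff_zero]
  | succ m => rw [Polynomial.coeff_X_mul]; simp [add_comm]

lemma natDegree_XaddOne_mul (p : Polynomial ℝ) (hp : p ≠ 0) :
    ((X + 1) * p).natDegree = p.natDegree + 1 := by
  have hd : (X + 1 : Polynomial ℝ).natDegree = 1 := by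
    have := Polynomial.natDegree_X_add_C (1 : ℝ)
    rwa [map_one] at this
  have hX : (X + 1 : Polynomial ℝ) ≠ 0 := by
    intro h
    rw [h] at hd
    simp at hd
  rw [Polynomial.natDegree_mul hX hp]
  omega

lemma conv_coeffList (p : Polynomial ℝ) (hp : p ≠ 0) :
    (List.range (((X + 1) * p).natDegree + 1)).map ((X + 1) * p).coeff
      = conv ((List.range (p.natDegree + 1)).map p.coeff) := by
  have hlen : ((List.range (p.natDegree + 1)).map p.coeff).length = p.natDegree + 1 := by
    simp
  apply List.ext_getElem
  · rw [conv_length _ (by simp), hlen]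
    simp [natDegree_XaddOne_mul p hp]
  · intro n h1 h2
    have hn : n ≤ p.natDegree + 1 := by
      simp only [List.length_map, List.length_range, natDegree_XaddOne_mul p hp] at h1
      omega
    rw [← List.getD_eq_getElem _ 0 h1, ← List.getD_eq_getElem _ 0 h2,
      conv_getD _ n (by rw [hlen]; exact hn)]
    have e1 : ((List.range (((X + 1) * p).natDegree + 1)).map ((X + 1) * p).coeff).getD n 0
        = ((X + 1) * p).coeff n := coeffList_getD _ n
    rw [e1, coeffList_getD, coeff_XaddOne_mul]
    congr 1
    split
    · rfl
    · exact (coeffList_getD p _).symm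

lemma V_mul_XaddOne (p : Polynomial ℝ) :
    coeffSignChanges ((X + 1) * p) ≤ coeffSignChanges p := by
  by_cases hp : p = 0
  · subst hp; rw [mul_zero]
  · rw [coeffSignChanges, conv_coeffList p hp]
    exact V_conv _

lemma V_pow_mul (b : ℕ) (r : Polynomial ℝ) :
    coeffSignChanges ((X + 1) ^ b * r) ≤ coeffSignChanges r := by
  induction b with
  | zero => simp
  | succ n ih =>
    have h : (X + 1 : Polynomial ℝ) ^ (n + 1) * r = (X + 1) * ((X + 1) ^ n * r) := by
      ring
    rw [h]
    exact (V_mul_XaddOne _).trans ih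

lemma V_pad (p : Polynomial ℝ) (N : ℕ) (h : p.natDegree + 1 ≤ N) :
    signChanges ((List.range N).map p.coeff) = coeffSignChanges p := by
  obtain ⟨j, hj⟩ := Nat.le.dest h
  have estep : coeffSignChanges p
      = signChanges ((List.range (p.natDegree + 1)).map p.coeff) := rfl
  have hnil : (((List.range j).map (fun x => p.natDegree + 1 + x)).map p.coeff).filter
      (fun x => decide (x ≠ 0)) = [] := by
    rw [List.filter_eq_nil_iff]
    intro a ha
    simp only [List.map_map, List.mem_map, List.mem_range, Function.comp] at ha
    obtain ⟨i, _, rfl⟩ := ha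
    simp [Polynomial.coeff_eq_zero_of_natDegree_lt (show p.natDegree < p.natDegree + 1 + i by omega)]
  rw [estep, ← hj, List.range_add, List.map_append, signChanges_eq_sgc, signChanges_eq_sgc,
    List.filter_append, hnil, List.append_nil]

lemma V_add_le (p q : Polynomial ℝ) (k : ℕ) (hq : q.degree < (k : ℕ)) :
    coeffSignChanges (p + q) ≤ k + coeffSignChanges p := by
  set N : ℕ := max ((p + q).natDegree + 1) (p.natDegree + 1) with hN
  set L' : List ℝ := (List.range N).map (p + q).coeff with hL'
  set L : List ℝ := (List.range N).map p.coeff with hL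
  have e1 : coeffSignChanges (p + q) = signChanges L' :=
    (V_pad (p + q) N (le_max_left _ _)).symm
  have e2 : coeffSignChanges p = signChanges L :=
    (V_pad p N (le_max_right _ _)).symm
  have hdrop : L'.drop k = L.drop k := by
    apply List.ext_getElem
    · simp [hL', hL]
    · intro n h1 h2
      rw [List.getElem_drop, List.getElem_drop]
      have hkn : k + n < N := by
        simp only [hL', List.length_drop, List.length_map, List.length_range] at h1
        omega
      simp only [hL', hL, List.getElem_map, List.getElem_range]
      rw [Polynomial.coeff_add, Polynomial.coeff_eq_zero_of_degree_lt
        (hq.trans_le (by exact_mod_cast Nat.le_add_right k n)), add_zero]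
  rw [e1, e2]
  calc signChanges L' = signChanges (L'.take k ++ L'.drop k) := by
        rw [List.take_append_drop]
  _ ≤ (L'.take k).length + signChanges (L'.drop k) := V_append_le _ _
  _ ≤ k + signChanges (L.drop k) := by
        rw [hdrop]
        have : (L'.take k).length ≤ k := by simp
        omega
  _ ≤ k + signChanges (L.take k ++ L.drop k) := by
        have := V_le_append (L.take k) (L.drop k)
        omega
  _ = k + signChanges L := by rw [List.take_append_drop]

/-- If `r` has degree `≤ m` and at most `m` coefficient sign changes, and `q` has degree
`≤ k - 1`, then `(t+1)^b r(t) + q(t)` has at most `m + k` coefficient sign changes. -/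
theorem signChanges_combination (b m k : ℕ) (r q : Polynomial ℝ)
    (hrdeg : r.natDegree ≤ m) (hrsc : coeffSignChanges r ≤ m)
    (hqdeg : q.degree < (k : ℕ)) :
    coeffSignChanges ((Polynomial.X + 1) ^ b * r + q) ≤ m + k := by
  calc coeffSignChanges ((X + 1) ^ b * r + q)
      ≤ k + coeffSignChanges ((X + 1) ^ b * r) := V_add_le _ q k hqdeg
  _ ≤ k + coeffSignChanges r := by have := V_pow_mul b r; omega
  _ ≤ m + k := by omega
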